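/- arXiv:2212.09055 — 7 statements merged into one kernel-verified Lean document; each statement's English description precedes it below -/
import Mathlib

section
/- If G₁ and G₂ are finite groups of coprime orders, then S(G₁ × G₂) = S(G₁) · S(G₂); equivalently, the function f(G) = S(G)/|G| is multiplicative on direct products of groups of coprime orders. -/
/-!
A homomorphism between groups of coprime orders is trivial, its image having order dividing
both. Hence, when `|M|` and `|N|` are coprime, every automorphism of `M × N` is a pair of
automorphisms of `M` and `N`, and every subgroup of `M × N` is a product `A × B`, since
`(x, 1)` and `(1, y)` are powers of `(x, y)`. As `|A|` and `|B|` are again coprime, the sum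
defining `S (M × N)` splits as a product.
-/

theorem finsum_mul_finsum {α β R : Type*} [Finite α] [Finite β] [NonUnitalNonAssocSemiring R]
    (f : α → R) (g : β → R) : (∑ᶠ a, f a) * ∑ᶠ b, g b = ∑ᶠ p : α × β, f p.1 * g p.2 := by
  cases nonempty_fintype α
  cases nonempty_fintype β
  simp only [finsum_eq_sum_of_fintype, Fintype.sum_mul_sum, Fintype.sum_prod_type]

section CoprimeProduct

variable {M N : Type*} [Group M] [Group N]

theorem MonoidHom.eq_one_of_coprime_card (h : (Nat.card M).Coprime (Nat.card N)) (f : M →* N) :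
    f = 1 :=
  f.range_eq_bot_iff.mp <| Subgroup.eq_bot_of_card_eq _ <|
    Nat.eq_one_of_dvd_coprimes h (Subgroup.card_range_dvd f) f.range.card_subgroup_dvd_card

section EndOfProd

open MonoidHom

variable {F : Type*} [FunLike F (M × N) (M × N)] [MonoidHomClass F (M × N) (M × N)]

theorem mk_fst_apply_mk_one_of_coprime (h : (Nat.card M).Coprime (Nat.card N)) (f : F) (x : M) :
    ((f (x, 1)).1, 1) = f (x, 1) :=
  Prod.ext rfl <| (DFunLike.congr_fun
    (((snd M N).comp ((f : M × N →* M × N).comp (inl M N))).eq_one_of_coprime_card h) x).symm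

theorem mk_snd_apply_one_mk_of_coprime (h : (Nat.card M).Coprime (Nat.card N)) (f : F) (y : N) :
    (1, (f (1, y)).2) = f (1, y) :=
  Prod.ext (DFunLike.congr_fun
    (((fst M N).comp ((f : M × N →* M × N).comp (inr M N))).eq_one_of_coprime_card h.symm)
      y).symm rfl

theorem apply_eq_of_coprime (h : (Nat.card M).Coprime (Nat.card N)) (f : F) (x : M) (y : N) :
    f (x, y) = ((f (x, 1)).1, (f (1, y)).2) := by
  rw [← Prod.fst_mul_snd (x, y), map_mul, ← mk_fst_apply_mk_one_of_coprime h,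
    ← mk_snd_apply_one_mk_of_coprime h]
  simp

end EndOfProd

namespace MulAut

open MonoidHom

def fstOfCoprime (h : (Nat.card M).Coprime (Nat.card N)) (e : MulAut (M × N)) : MulAut M :=
  MonoidHom.toMulEquiv ((fst M N).comp ((e : M × N →* M × N).comp (inl M N)))
    ((fst M N).comp ((e.symm : M × N →* M × N).comp (inl M N)))
    (by ext x; simp [mk_fst_apply_mk_one_of_coprime h])
    (by ext x; simp [mk_fst_apply_mk_one_of_coprime h])

def sndOfCoprime (h : (Nat.card M).Coprime (Nat.card N)) (e : MulAut (M × N)) : MulAut N :=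
  MonoidHom.toMulEquiv ((snd M N).comp ((e : M × N →* M × N).comp (inr M N)))
    ((snd M N).comp ((e.symm : M × N →* M × N).comp (inr M N)))
    (by ext y; simp [mk_snd_apply_one_mk_of_coprime h])
    (by ext y; simp [mk_snd_apply_one_mk_of_coprime h])

def prodEquivOfCoprime (h : (Nat.card M).Coprime (Nat.card N)) :
    MulAut M × MulAut N ≃ MulAut (M × N) where
  toFun p := p.1.prodCongr p.2
  invFun e := (fstOfCoprime h e, sndOfCoprime h e)
  left_inv _ := rfl
  right_inv e := by ext ⟨x, y⟩ <;> rw [apply_eq_of_coprime h e x y] <;> rfl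

theorem card_prod_of_coprime (h : (Nat.card M).Coprime (Nat.card N)) :
    Nat.card (MulAut (M × N)) = Nat.card (MulAut M) * Nat.card (MulAut N) := by
  rw [← Nat.card_prod, Nat.card_congr (prodEquivOfCoprime h)]

end MulAut

namespace Subgroup

open MonoidHom

theorem mk_one_mem_of_coprime (h : (Nat.card M).Coprime (Nat.card N)) {H : Subgroup (M × N)}
    {x : M} {y : N} (hxy : (x, y) ∈ H) : (x, 1) ∈ H := by
  obtain ⟨m, hm⟩ :=
    exists_pow_eq_self_of_coprime (h.symm.coprime_dvd_right (_root_.orderOf_dvd_natCard x))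
  have : (x, y) ^ (Nat.card N * m) = (x, 1) := by
    simp [pow_mul, hm, pow_card_eq_one']
  exact this ▸ H.pow_mem hxy _

theorem one_mk_mem_of_coprime (h : (Nat.card M).Coprime (Nat.card N)) {H : Subgroup (M × N)}
    {x : M} {y : N} (hxy : (x, y) ∈ H) : (1, y) ∈ H := by
  obtain ⟨m, hm⟩ :=
    exists_pow_eq_self_of_coprime (h.coprime_dvd_right (_root_.orderOf_dvd_natCard y))
  have : (x, y) ^ (Nat.card M * m) = (1, y) := by
    simp [pow_mul, hm, pow_card_eq_one']
  exact this ▸ H.pow_mem hxy _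

theorem prod_map_fst_map_snd_of_coprime (h : (Nat.card M).Coprime (Nat.card N))
    (H : Subgroup (M × N)) : (H.map (fst M N)).prod (H.map (snd M N)) = H := by
  refine le_antisymm (fun ⟨x, y⟩ hxy => ?_) (le_prod_iff.mpr ⟨le_rfl, le_rfl⟩)
  obtain ⟨⟨⟨x, y'⟩, hx, rfl⟩, ⟨⟨x', y⟩, hy, rfl⟩⟩ := mem_prod.mp hxy
  simpa using H.mul_mem (mk_one_mem_of_coprime h hx) (one_mk_mem_of_coprime h hy)

def prodEquivOfCoprime (h : (Nat.card M).Coprime (Nat.card N)) :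
    Subgroup M × Subgroup N ≃ Subgroup (M × N) where
  toFun p := p.1.prod p.2
  invFun H := (H.map (fst M N), H.map (snd M N))
  left_inv p := by ext x <;> simpa [mem_prod] using fun _ => ⟨1, one_mem _⟩
  right_inv := prod_map_fst_map_snd_of_coprime h

theorem card_mulAut_prod_of_coprime (h : (Nat.card M).Coprime (Nat.card N))
    (A : Subgroup M) (B : Subgroup N) :
    Nat.card (MulAut (A.prod B)) = Nat.card (MulAut A) * Nat.card (MulAut B) := by
  rw [Nat.card_congr (MulAut.congr (A.prodEquiv B)).toEquiv]
  exact MulAut.card_prod_of_coprime (h.of_dvd A.card_subgroup_dvd_card B.card_subgroup_dvd_card)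

end Subgroup

end CoprimeProduct

/-- `S G` is the sum, over all subgroups `H` of `G`, of the number of
automorphisms of `H`. -/
noncomputable def S (G : Type*) [Group G] : ℕ :=
  ∑ᶠ H : Subgroup G, Nat.card (MulAut ↥H)

/-- If `G₁` and `G₂` are finite groups of coprime orders, then
`S(G₁ × G₂) = S(G₁) · S(G₂)`. -/
theorem stmt_2 (G₁ G₂ : Type*) [Group G₁] [Group G₂] [Finite G₁] [Finite G₂]
    (h : (Nat.card G₁).Coprime (Nat.card G₂)) :
    S (G₁ × G₂) = S G₁ * S G₂ := by
  rw [S, S, S, finsum_mul_finsum, ← finsum_comp_equiv (Subgroup.prodEquivOfCoprime h)]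
  exact finsum_congr fun p => Subgroup.card_mulAut_prod_of_coprime h p.1 p.2
end

section
/- For any finite non-cyclic group G, f(G) ≥ 1 + 1/|Z(G)|, where Z(G) is the center of G; equivalently, |Z(G)| · S(G) ≥ (|Z(G)| + 1) · |G|. -/
open Finset

theorem MulAut.ker_conj (G : Type*) [Group G] :
    (MulAut.conj : G →* MulAut G).ker = Subgroup.center G := by
  ext g
  simp only [MonoidHom.mem_ker, Subgroup.mem_center_iff, MulEquiv.ext_iff, MulAut.conj_apply,
    MulAut.one_apply, mul_inv_eq_iff_eq_mul]
  exact forall_congr' fun _ => eq_comm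

theorem card_le_card_center_mul_card_mulAut (G : Type*) [Group G] [Finite G] :
    Nat.card G ≤ Nat.card (Subgroup.center G) * Nat.card (MulAut G) := by
  rw [Subgroup.card_eq_card_quotient_mul_card_subgroup (Subgroup.center G), mul_comm,
    ← MulAut.ker_conj]
  exact Nat.mul_le_mul_left _ <|
    Nat.card_le_card_of_injective _ (QuotientGroup.kerLift_injective MulAut.conj)

theorem card_filter_orderOf_eq_card_le_card_mulAut (H : Type*) [Group H] [Fintype H]
    [DecidableEq H] :
    #{x : H | orderOf x = Fintype.card H} ≤ Nat.card (MulAut H) := by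
  rcases (univ.filter fun x : H => orderOf x = Fintype.card H).eq_empty_or_nonempty
    with hempty | ⟨x, hx⟩
  · simp [hempty]
  · rw [mem_filter, ← Nat.card_eq_fintype_card] at hx
    have := isCyclic_of_orderOf_eq_card x hx.2
    rw [IsCyclic.card_orderOf_eq_totient dvd_rfl, IsCyclic.card_mulAut, Nat.card_eq_fintype_card]

section Counting

open scoped Classical

variable {G : Type*} [Group G] [Fintype G]

theorem card_filter_zpowers_eq_le_card_mulAut (H : Subgroup G) :
    #{g : G | Subgroup.zpowers g = H} ≤ Nat.card (MulAut H) := by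
  refine le_trans (card_le_card_of_surjOn Subtype.val ?_)
    (card_filter_orderOf_eq_card_le_card_mulAut H)
  intro g hg
  simp only [coe_filter, mem_univ, true_and, Set.mem_ofPred_eq] at hg
  refine ⟨⟨g, hg ▸ Subgroup.mem_zpowers g⟩, ?_, rfl⟩
  simp only [coe_filter, mem_univ, true_and, Set.mem_ofPred_eq]
  rw [Subgroup.orderOf_mk, ← Nat.card_zpowers, hg, Nat.card_eq_fintype_card]

theorem card_le_sum_card_mulAut_of_not_isCyclic (hG : ¬ IsCyclic G) :
    Nat.card G ≤ ∑ H ∈ univ.erase (⊤ : Subgroup G), Nat.card (MulAut H) := by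
  have no_generator : #{g : G | Subgroup.zpowers g = ⊤} = 0 := by
    rw [card_eq_zero, filter_eq_empty_iff]
    exact fun g _ hg => hG ⟨g, fun x => hg.ge (Subgroup.mem_top x)⟩
  calc Nat.card G = ∑ H : Subgroup G, #{g : G | Subgroup.zpowers g = H} := by
        rw [Nat.card_eq_fintype_card, ← card_univ]
        exact card_eq_sum_card_fiberwise fun _ _ => mem_univ _
    _ = ∑ H ∈ univ.erase ⊤, #{g : G | Subgroup.zpowers g = H} :=
        (sum_erase (f := fun H : Subgroup G => #{g : G | Subgroup.zpowers g = H}) univ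
          no_generator).symm
    _ ≤ ∑ H ∈ univ.erase (⊤ : Subgroup G), Nat.card (MulAut H) :=
        sum_le_sum fun H _ => card_filter_zpowers_eq_le_card_mulAut H

theorem S_eq_card_mulAut_add_sum_erase_top :
    S G = Nat.card (MulAut G) + ∑ H ∈ univ.erase (⊤ : Subgroup G), Nat.card (MulAut H) := by
  rw [S, finsum_eq_sum_of_fintype, ← add_sum_erase _ _ (mem_univ ⊤),
    Nat.card_congr (MulAut.congr Subgroup.topEquiv).toEquiv]

end Counting

/-- For any finite non-cyclic group `G`, `f(G) ≥ 1 + 1/|Z(G)|`, i.e.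
`|Z(G)| · S(G) ≥ (|Z(G)| + 1) · |G|`. -/
theorem stmt_5 (G : Type*) [Group G] [Finite G] (h : ¬ IsCyclic G) :
    (Nat.card (Subgroup.center G) + 1) * Nat.card G ≤
      Nat.card (Subgroup.center G) * S G := by
  classical
  have := Fintype.ofFinite G
  calc (Nat.card (Subgroup.center G) + 1) * Nat.card G
      = Nat.card G + Nat.card (Subgroup.center G) * Nat.card G := by ring
    _ ≤ Nat.card (Subgroup.center G) * Nat.card (MulAut G)
        + Nat.card (Subgroup.center G)
          * ∑ H ∈ univ.erase (⊤ : Subgroup G), Nat.card (MulAut H) :=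
        add_le_add (card_le_card_center_mul_card_mulAut G)
          (Nat.mul_le_mul_left _ (card_le_sum_card_mulAut_of_not_isCyclic h))
    _ = Nat.card (Subgroup.center G) * S G := by
        rw [S_eq_card_mulAut_add_sum_erase_top]; ring
end

section
/- For any finite non-cyclic centerless group G (i.e. with trivial center), f(G) ≥ 2, i.e. S(G) ≥ 2|G|. -/
open Subgroup

section

variable {G : Type*} [Group G]

theorem MulAut.conj_injective_of_center_eq_bot (hc : center G = ⊥) :
    Function.Injective (MulAut.conj : G →* MulAut G) := by
  refine (injective_iff_map_eq_one _).mpr fun g hg => ?_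
  have hg_center : g ∈ center G := mem_center_iff.mpr fun x => by
    have hx := DFunLike.congr_fun hg x
    rw [MulAut.conj_apply, MulAut.one_apply, mul_inv_eq_iff_eq_mul] at hx
    exact hx.symm
  simpa [hc] using hg_center

theorem card_le_card_mulAut_of_center_eq_bot [Finite G] (hc : center G = ⊥) :
    Nat.card G ≤ Nat.card (MulAut G) :=
  Nat.card_le_card_of_injective _ (MulAut.conj_injective_of_center_eq_bot hc)

theorem exists_mulAut_apply_eq_of_forall_mem_zpowers {g₀ g : G}
    (hg₀ : ∀ x, x ∈ zpowers g₀) (hg : ∀ x, x ∈ zpowers g) : ∃ φ : MulAut G, φ g₀ = g :=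
  ⟨mulEquivOfOrderOfEq hg₀ hg (by rw [orderOf_eq_card_of_forall_mem_zpowers hg₀,
    orderOf_eq_card_of_forall_mem_zpowers hg]), mulEquivOfOrderOfEq_apply_gen ..⟩

theorem forall_mem_zpowers_of_zpowers_eq {H : Subgroup G} {g : G} (hg : zpowers g = H) :
    ∀ x : H, x ∈ zpowers (⟨g, hg ▸ mem_zpowers g⟩ : H) := by
  subst hg
  rintro ⟨x, hx⟩
  obtain ⟨n, rfl⟩ := mem_zpowers_iff.mp hx
  exact mem_zpowers_iff.mpr ⟨n, Subtype.ext (by simp)⟩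

theorem card_zpowers_eq_le_card_mulAut [Finite G] (H : Subgroup G) :
    Nat.card {g : G // zpowers g = H} ≤ Nat.card (MulAut H) := by
  rcases isEmpty_or_nonempty {g : G // zpowers g = H} with _ | ⟨⟨g₀, hg₀⟩⟩
  · simp
  choose φ hφ using fun g : {g : G // zpowers g = H} =>
    exists_mulAut_apply_eq_of_forall_mem_zpowers
      (forall_mem_zpowers_of_zpowers_eq hg₀) (forall_mem_zpowers_of_zpowers_eq g.2)
  refine Nat.card_le_card_of_injective φ fun g g' h => Subtype.ext ?_
  simpa [hφ] using congrArg (fun ψ : MulAut H => (ψ ⟨g₀, hg₀ ▸ mem_zpowers g₀⟩ : G)) h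

theorem sum_card_zpowers_eq_card [Finite G] [Fintype (Subgroup G)] :
    ∑ H : Subgroup G, Nat.card {g : G // zpowers g = H} = Nat.card G := by
  rw [← Nat.card_sigma, Nat.card_congr (Equiv.sigmaFiberEquiv fun g : G => zpowers g)]

end

/-- For any finite non-cyclic centerless group `G`, `f(G) ≥ 2`, i.e. `S(G) ≥ 2|G|`. -/
theorem stmt_6 (G : Type*) [Group G] [Finite G] (h : ¬ IsCyclic G)
    (hc : Subgroup.center G = ⊥) :
    2 * Nat.card G ≤ S G := by
  classical
  have : Fintype (Subgroup G) := Fintype.ofFinite _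
  have hterm (H : Subgroup G) : Nat.card {g : G // zpowers g = H} +
      (if H = ⊤ then Nat.card G else 0) ≤ Nat.card (MulAut H) := by
    split_ifs with hH
    · subst hH
      have hno_gen : IsEmpty {g : G // zpowers g = ⊤} :=
        ⟨fun g => h (isCyclic_iff_exists_zpowers_eq_top.mpr ⟨g, g.2⟩)⟩
      rw [Nat.card_of_isEmpty, zero_add, Nat.card_congr (MulAut.congr topEquiv).toEquiv]
      exact card_le_card_mulAut_of_center_eq_bot hc
    · exact card_zpowers_eq_le_card_mulAut H
  calc 2 * Nat.card G
      = ∑ H : Subgroup G, (Nat.card {g : G // zpowers g = H} +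
          if H = ⊤ then Nat.card G else 0) := by
        rw [Finset.sum_add_distrib, sum_card_zpowers_eq_card, Finset.sum_ite_eq',
          if_pos (Finset.mem_univ _), two_mul]
    _ ≤ ∑ H : Subgroup G, Nat.card (MulAut H) := Finset.sum_le_sum fun H _ => hterm H
    _ = S G := (finsum_eq_sum_of_fintype _).symm
end

section
/- Let p be a prime and let G ≅ ∏_{i=1}^{k} Z_{p^{n_i}} be a finite abelian p-group, where 1 ≤ n₁ ≤ n₂ ≤ ... ≤ n_k. For r = 1,...,k, set a_r = max{ s | n_s = n_r } and b_r = min{ s | n_s = n_r }. Then |Aut(G)| = ∏_{i=1}^{k} (p^{a_i} − p^{i−1}) · ∏_{u=1}^{k} p^{n_u (k − a_u)} · ∏_{v=1}^{k} p^{(n_v − 1)(k − b_v + 1)}. -/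
/-!
An endomorphism `φ` of `G = ∏ᵢ ℤ/p^{nᵢ}` is the same as a choice of the images `φ(eⱼ)`, where the
`i`-th coordinate of `φ(eⱼ)` is an arbitrary element of `ℤ/p^{nᵢ}` killed by `p^{nⱼ}`. Since `p` is
nilpotent on `G`, Nakayama's lemma shows that `φ` is an automorphism iff its reduction mod `p`, a
`k × k` matrix over `𝔽_p`, is invertible. That matrix is block upper triangular (its `(i, j)` entry
vanishes when `nⱼ < nᵢ`), and choosing its columns one after the other inside the increasing flag
of coordinate subspaces gives `∏ⱼ (p^{aⱼ} - p^{j-1})` invertible matrices of this shape. Each of them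
has the same number of lifts, `∏_{i,j} p^{nᵢ - 1}` over the pairs with `nᵢ ≤ nⱼ` times
`∏_{i,j} p^{nⱼ}` over those with `nⱼ < nᵢ`, and regrouping these products gives the other two factors.
-/

open Finset

theorem Nat.card_addAut_eq_card_surjective (G : Type*) [AddGroup G] [Finite G] :
    Nat.card (AddAut G) = Nat.card {φ : G →+ G // Function.Surjective φ} :=
  Nat.card_congr
    { toFun e := ⟨e, e.surjective⟩
      invFun φ := AddEquiv.ofBijective φ.1 φ.2.bijective_of_finite
      left_inv _ := AddEquiv.ext fun _ => rfl
      right_inv _ := rfl }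

theorem Nat.card_subtype_comp_eq_mul {α β : Type*} [Finite α] [Finite β] (f : α → β)
    {P : β → Prop} {c : ℕ} (hc : ∀ b, P b → Nat.card {a // f a = b} = c) :
    Nat.card {a // P (f a)} = Nat.card {b // P b} * c := by
  have := Fintype.ofFinite {b // P b}
  let e : {a // P (f a)} ≃ Σ b : {b // P b}, {a // f a = b} :=
    { toFun a := ⟨⟨f a, a.2⟩, a.1, rfl⟩
      invFun s := ⟨s.2.1, by rw [s.2.2]; exact s.1.2⟩
      left_inv _ := rfl
      right_inv s := Sigma.subtype_ext (Subtype.ext s.2.2) rfl }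
  rw [Nat.card_congr e, Nat.card_sigma, sum_congr rfl fun b _ => hc b.1 b.2, sum_const,
    Finset.card_univ, smul_eq_mul, Nat.card_eq_fintype_card]

theorem AddMonoidHom.surjective_of_forall_eq_add_nsmul {A B : Type*} [AddCommMonoid A]
    [AddMonoid B] (φ : B →+ A) {m N : ℕ} (hN : ∀ x : A, m ^ N • x = 0)
    (h : ∀ x, ∃ y u, x = φ y + m • u) : Function.Surjective φ := by
  have approx (t : ℕ) : ∀ x, ∃ y u, x = φ y + m ^ t • u := by
    induction t with
    | zero => exact fun x => ⟨0, x, by simp⟩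
    | succ t ih =>
      intro x
      obtain ⟨y, u, rfl⟩ := ih x
      obtain ⟨w, v, rfl⟩ := h u
      refine ⟨y + m ^ t • w, v, ?_⟩
      rw [map_add, map_nsmul, smul_add, add_assoc, pow_succ, ← smul_smul]
  intro x
  obtain ⟨y, u, rfl⟩ := approx N x
  exact ⟨y, by rw [hN, add_zero]⟩

namespace ZMod

theorem addMonoidHom_ext {N : ℕ} {M : Type*} [AddGroup M] {f g : ZMod N →+ M}
    (h : f 1 = g 1) : f = g := by
  ext z
  obtain ⟨m, rfl⟩ := intCast_surjective z
  rw [← zsmul_one, map_zsmul, map_zsmul, h]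

theorem card_castHom_fiber {N d : ℕ} [NeZero N] (h : d ∣ N) (c : ZMod d) :
    Nat.card {z : ZMod N // castHom h (ZMod d) z = c} = N / d := by
  have : NeZero d := ⟨fun hd => NeZero.ne N (Nat.eq_zero_of_zero_dvd (hd ▸ h))⟩
  let f := (castHom h (ZMod d)).toAddMonoidHom
  have hf : Function.Surjective f := castHom_surjective h
  have hker : Nat.card f.ker * d = N := by
    have := f.ker.card_mul_index
    rwa [AddSubgroup.index_ker, AddMonoidHom.range_eq_top.2 hf, AddSubgroup.card_top,
      Nat.card_zmod, Nat.card_zmod] at this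
  change Nat.card (f ⁻¹' {c}) = N / d
  rw [Nat.card_congr (AddMonoidHom.fiberEquivKerOfSurjective hf c)]
  exact (Nat.div_eq_of_eq_mul_left (NeZero.pos d) hker.symm).symm

theorem castHom_eq_zero_iff_dvd_val {N d : ℕ} [NeZero N] (h : d ∣ N) (z : ZMod N) :
    castHom h (ZMod d) z = 0 ↔ d ∣ z.val := by
  rw [castHom_apply, cast_eq_val, natCast_eq_zero_iff]

theorem nsmul_eq_zero_iff_castHom_eq_zero {N d e : ℕ} [NeZero N] (hN : d * e = N) (z : ZMod N) :
    d • z = 0 ↔ castHom (Dvd.intro_left d hN) (ZMod e) z = 0 := by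
  subst hN
  have hd : 0 < d := Nat.pos_of_ne_zero (left_ne_zero_of_mul (NeZero.ne (d * e)))
  rw [castHom_eq_zero_iff_dvd_val, ← Nat.mul_dvd_mul_iff_left hd, ← natCast_eq_zero_iff,
    Nat.cast_mul, natCast_zmod_val, ← nsmul_eq_mul]

theorem exists_eq_nsmul_of_castHom_eq_zero {N d : ℕ} [NeZero N] (h : d ∣ N) {z : ZMod N}
    (hz : castHom h (ZMod d) z = 0) : ∃ u : ZMod N, z = d • u := by
  obtain ⟨t, ht⟩ := (castHom_eq_zero_iff_dvd_val h z).1 hz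
  exact ⟨t, by rw [← natCast_zmod_val z, ht, Nat.cast_mul, nsmul_eq_mul]⟩

theorem castHom_eq_zero_of_nsmul_eq_zero {p m l : ℕ} [NeZero (p ^ m)] (hlm : l < m)
    {z : ZMod (p ^ m)} (hz : p ^ l • z = 0) :
    castHom (dvd_pow_self p (Nat.ne_zero_of_lt hlm)) (ZMod p) z = 0 := by
  rw [nsmul_eq_zero_iff_castHom_eq_zero (pow_mul_pow_sub p hlm.le), castHom_eq_zero_iff_dvd_val]
    at hz
  exact (castHom_eq_zero_iff_dvd_val _ z).2 ((dvd_pow_self p (by omega)).trans hz)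

theorem card_nsmul_eq_zero_and_castHom_eq {p m l : ℕ} [NeZero p] (hm : m ≠ 0) {c : ZMod p}
    (hc : l < m → c = 0) :
    Nat.card {z : ZMod (p ^ m) // p ^ l • z = 0 ∧ castHom (dvd_pow_self p hm) (ZMod p) z = c} =
      if m ≤ l then p ^ (m - 1) else p ^ l := by
  have hp : 0 < p := NeZero.pos p
  split_ifs with hml
  · have htor (z : ZMod (p ^ m)) : p ^ l • z = 0 := by
      rw [nsmul_eq_mul, (natCast_eq_zero_iff _ _).2 (pow_dvd_pow p hml), zero_mul]
    simp only [htor, true_and]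
    rw [card_castHom_fiber, ← Nat.pow_div (Nat.one_le_iff_ne_zero.2 hm) hp, pow_one]
  · have hlm := not_le.1 hml
    obtain rfl := hc hlm
    have hsplit := pow_mul_pow_sub p hlm.le
    rw [Nat.card_congr <| Equiv.subtypeEquivRight fun z =>
        (and_iff_left_of_imp (castHom_eq_zero_of_nsmul_eq_zero hlm)).trans
          (nsmul_eq_zero_iff_castHom_eq_zero hsplit z),
      card_castHom_fiber, ← hsplit, Nat.mul_div_cancel _ (pow_pos hp _)]

end ZMod

section PiZMod

variable {ι : Type*} [Fintype ι] [DecidableEq ι] {N : ι → ℕ} {M : Type*} [AddCommGroup M]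

def piZModLift (d : ∀ j, {x : M // N j • x = 0}) : (∀ j, ZMod (N j)) →+ M :=
  ∑ j, (ZMod.lift (N j) ⟨zmultiplesHom M (d j).1, by simpa using (d j).2⟩).comp
    (Pi.evalAddMonoidHom _ j)

theorem piZModLift_single_one (d : ∀ j, {x : M // N j • x = 0}) (j : ι) :
    piZModLift d (Pi.single j 1) = d j := by
  rw [piZModLift, AddMonoidHom.finsetSum_apply, sum_eq_single j]
  · simp only [AddMonoidHom.coe_comp, Function.comp_apply, Pi.evalAddMonoidHom_apply,
      Pi.single_eq_same]
    rw [← Int.cast_one, ZMod.lift_coe, zmultiplesHom_apply, one_zsmul]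
  · intro i _ hij
    simp only [AddMonoidHom.coe_comp, Function.comp_apply, Pi.evalAddMonoidHom_apply,
      Pi.single_eq_of_ne hij, map_zero]
  · simp

variable (N M) in
def piZModHomEquiv : ((∀ j, ZMod (N j)) →+ M) ≃ ∀ j, {x : M // N j • x = 0} where
  toFun φ j := ⟨φ (Pi.single j 1), by
    rw [← map_nsmul, ← Pi.single_smul, nsmul_eq_mul, mul_one, ZMod.natCast_self, Pi.single_zero,
      map_zero]⟩
  invFun := piZModLift
  left_inv φ := AddMonoidHom.functions_ext' _ _ _ fun j =>
    ZMod.addMonoidHom_ext (piZModLift_single_one _ j)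
  right_inv d := funext fun j => Subtype.ext (piZModLift_single_one d j)

end PiZMod

section Flag

variable {K V : Type*} [DivisionRing K] [Fintype K] [AddCommGroup V] [Module K V] [Finite V]

theorem card_mem_and_notMem_span {m : ℕ} {u : Fin m → V} (hu : LinearIndependent K u)
    {W : Submodule K V} (huW : ∀ j, u j ∈ W) :
    Nat.card {x // x ∈ W ∧ x ∉ Submodule.span K (Set.range u)} =
      Nat.card W - Fintype.card K ^ m := by
  have hspan : (Submodule.span K (Set.range u) : Set V) ⊆ W :=
    Submodule.span_le.2 (Set.range_subset_iff.2 huW)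
  have hcard : Nat.card (Submodule.span K (Set.range u)) = Fintype.card K ^ m := by
    rw [Module.natCard_eq_pow_finrank (K := K), finrank_span_eq_card hu, Fintype.card_fin,
      Nat.card_eq_fintype_card]
  change Nat.card ((W : Set V) \ (Submodule.span K (Set.range u) : Set V) : Set V) = _
  rw [Nat.card_coe_set_eq, Set.ncard_sdiff hspan, ← Nat.card_coe_set_eq, ← Nat.card_coe_set_eq,
    SetLike.coe_sort_coe, SetLike.coe_sort_coe, hcard]

theorem card_linearIndependent_mem_of_monotone {m : ℕ} (W : Fin m → Submodule K V)
    (hW : Monotone W) :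
    Nat.card {v : Fin m → V // LinearIndependent K v ∧ ∀ j, v j ∈ W j} =
      ∏ j : Fin m, (Nat.card (W j) - Fintype.card K ^ (j : ℕ)) := by
  induction m with
  | zero =>
    rw [Fin.prod_univ_zero, Nat.card_eq_one_iff_unique]
    exact ⟨⟨fun v w => Subtype.ext (Subsingleton.elim _ _)⟩,
      ⟨⟨Fin.elim0, linearIndependent_empty_type, fun j => j.elim0⟩⟩⟩
  | succ m ih =>
    let e : {v : Fin (m + 1) → V // LinearIndependent K v ∧ ∀ j, v j ∈ W j} ≃
        Σ u : {u : Fin m → V // LinearIndependent K u ∧ ∀ j, u j ∈ W j.castSucc},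
          {x // x ∈ W (Fin.last m) ∧ x ∉ Submodule.span K (Set.range u.1)} :=
      { toFun v := ⟨⟨Fin.init v.1, (linearIndependent_finSucc'.1 v.2.1).1, fun j => v.2.2 _⟩,
          v.1 (Fin.last m), v.2.2 _, (linearIndependent_finSucc'.1 v.2.1).2⟩
        invFun s := ⟨Fin.snoc s.1.1 s.2.1,
          linearIndependent_finSucc'.2 (by simpa using ⟨s.1.2.1, s.2.2.2⟩),
          Fin.lastCases (by simpa using s.2.2.1) (fun j => by simpa using s.1.2.2 j)⟩
        left_inv v := Subtype.ext (Fin.snoc_init_self v.1)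
        right_inv s := Sigma.subtype_ext (Subtype.ext (by simp)) (by simp) }
    have := Fintype.ofFinite {u : Fin m → V // LinearIndependent K u ∧ ∀ j, u j ∈ W j.castSucc}
    rw [Nat.card_congr e, Nat.card_sigma,
      sum_congr rfl fun u _ => card_mem_and_notMem_span u.2.1
        fun j => hW (Fin.castSucc_lt_last j).le (u.2.2 j),
      sum_const, Finset.card_univ, smul_eq_mul, ← Nat.card_eq_fintype_card,
      ih (fun j => W j.castSucc) (hW.comp Fin.strictMono_castSucc.monotone),
      Fin.prod_univ_castSucc]
    rfl

end Flag

theorem Submodule.card_pi_bot {F ι : Type*} [Field F] [Fintype F] [Fintype ι] (s : Set ι)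
    [DecidablePred (· ∈ s)] :
    Nat.card (Submodule.pi s fun _ : ι => (⊥ : Submodule F F)) =
      Fintype.card F ^ #{i | i ∉ s} := by
  let e : Submodule.pi s (fun _ : ι => (⊥ : Submodule F F)) ≃ ∀ i, {c : F // i ∈ s → c = 0} :=
    (Equiv.subtypeEquivRight fun x => by simp [Submodule.mem_pi]).trans Equiv.subtypePiEquivPi
  have hfactor (i : ι) :
      Nat.card {c : F // i ∈ s → c = 0} = if i ∈ s then 1 else Fintype.card F := by
    split_ifs with hi <;> simp [hi]
  rw [Nat.card_congr e, Nat.card_pi, prod_congr rfl fun i _ => hfactor i, prod_ite,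
    prod_const_one, one_mul, prod_const]

theorem Matrix.card_isUnit_and_eq_zero_of_lt {F : Type*} [Field F] [Fintype F] {k : ℕ}
    {α : Type*} [LinearOrder α] {n : Fin k → α} (hn : Monotone n) :
    Nat.card {B : Matrix (Fin k) (Fin k) F // IsUnit B ∧ ∀ i j, n j < n i → B i j = 0} =
      ∏ j, (Fintype.card F ^ #{i | n i ≤ n j} - Fintype.card F ^ (j : ℕ)) := by
  let W (j : Fin k) : Submodule F (Fin k → F) := Submodule.pi {i | n j < n i} fun _ => ⊥
  have hW : Monotone W := fun j j' hjj' x hx i hi => hx i (lt_of_le_of_lt (hn hjj') hi)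
  have hcard (j : Fin k) : Nat.card (W j) = Fintype.card F ^ #{i | n i ≤ n j} := by
    simp only [W, Submodule.card_pi_bot, Set.mem_ofPred_eq, not_lt]
  let e : {B : Matrix (Fin k) (Fin k) F // IsUnit B ∧ ∀ i j, n j < n i → B i j = 0} ≃
      {v : Fin k → Fin k → F // LinearIndependent F v ∧ ∀ j, v j ∈ W j} :=
    { toFun B := ⟨B.1.col, Matrix.linearIndependent_cols_iff_isUnit.2 B.2.1,
        fun j i hi => B.2.2 i j hi⟩
      invFun v := ⟨Matrix.of fun i j => v.1 j i,
        Matrix.linearIndependent_cols_iff_isUnit.1 v.2.1, fun i j hij => v.2.2 j i hij⟩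
      left_inv _ := rfl
      right_inv _ := rfl }
  simp_rw [Nat.card_congr e, card_linearIndependent_mem_of_monotone W hW, hcard]

section PrimePowerProduct

open scoped Matrix

variable {p k : ℕ} {n : Fin k → ℕ} (hn : ∀ i, n i ≠ 0)

def reduceModP : (∀ i, ZMod (p ^ n i)) →+* (Fin k → ZMod p) :=
  RingHom.pi fun i => (ZMod.castHom (dvd_pow_self p (hn i)) (ZMod p)).comp (Pi.evalRingHom _ i)

theorem reduceModP_apply (x : ∀ i, ZMod (p ^ n i)) (i : Fin k) :
    reduceModP hn x i = ZMod.castHom (dvd_pow_self p (hn i)) (ZMod p) (x i) := rfl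

theorem reduceModP_surjective : Function.Surjective (reduceModP (p := p) hn) :=
  Function.Surjective.piMap fun i => ZMod.castHom_surjective (dvd_pow_self p (hn i))

def modPMatrix (φ : (∀ i, ZMod (p ^ n i)) →+ ∀ i, ZMod (p ^ n i)) :
    Matrix (Fin k) (Fin k) (ZMod p) :=
  Matrix.of fun i j => reduceModP hn (φ (Pi.single j 1)) i

theorem reduceModP_map (φ : (∀ i, ZMod (p ^ n i)) →+ ∀ i, ZMod (p ^ n i))
    (x : ∀ i, ZMod (p ^ n i)) :
    reduceModP hn (φ x) = modPMatrix hn φ *ᵥ reduceModP hn x := by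
  have hsingle (j : Fin k) :
      reduceModP hn (Pi.single (M := fun i => ZMod (p ^ n i)) j 1) = Pi.single j 1 := by
    funext i
    rcases eq_or_ne i j with rfl | hij
    · rw [reduceModP_apply, Pi.single_eq_same, Pi.single_eq_same, map_one]
    · rw [reduceModP_apply, Pi.single_eq_of_ne hij, Pi.single_eq_of_ne hij, map_zero]
  have h : (reduceModP hn).toAddMonoidHom.comp φ =
      (Matrix.mulVecLin (modPMatrix hn φ)).toAddMonoidHom.comp (reduceModP hn).toAddMonoidHom :=
    AddMonoidHom.functions_ext' _ _ _ fun j => ZMod.addMonoidHom_ext <| by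
      simp only [AddMonoidHom.coe_comp, Function.comp_apply, RingHom.toAddMonoidHom_eq_coe,
        AddMonoidHom.coe_coe, LinearMap.toAddMonoidHom_coe, Matrix.mulVecLin_apply, hsingle,
        AddMonoidHom.coe_single, Matrix.mulVec_single_one]
      rfl
  exact DFunLike.congr_fun h x

variable [NeZero p]

theorem exists_eq_nsmul_of_reduceModP_eq_zero {x : ∀ i, ZMod (p ^ n i)}
    (hx : reduceModP hn x = 0) : ∃ u, x = p • u := by
  choose u hu using fun i =>
    ZMod.exists_eq_nsmul_of_castHom_eq_zero (dvd_pow_self p (hn i)) (congrFun hx i)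
  exact ⟨u, funext hu⟩

theorem surjective_iff_isUnit_modPMatrix (φ : (∀ i, ZMod (p ^ n i)) →+ ∀ i, ZMod (p ^ n i)) :
    Function.Surjective φ ↔ IsUnit (modPMatrix hn φ) := by
  rw [← Matrix.mulVec_surjective_iff_isUnit]
  constructor
  · intro hφ y
    obtain ⟨x, rfl⟩ := ((reduceModP_surjective hn).comp hφ) y
    exact ⟨reduceModP hn x, (reduceModP_map hn φ x).symm⟩
  · intro hM
    have hcard : Nat.card (∀ i, ZMod (p ^ n i)) = p ^ ∑ i, n i := by
      simp [prod_pow_eq_pow_sum]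
    refine φ.surjective_of_forall_eq_add_nsmul (m := p) (N := ∑ i, n i) (fun x => ?_) fun x => ?_
    · rw [← hcard, card_nsmul_eq_zero']
    obtain ⟨v, hv⟩ := hM (reduceModP hn x)
    obtain ⟨y, rfl⟩ := reduceModP_surjective hn v
    obtain ⟨u, hu⟩ := exists_eq_nsmul_of_reduceModP_eq_zero hn (x := x - φ y)
      (by rw [map_sub, reduceModP_map, hv, sub_self])
    exact ⟨y, u, by rw [← hu, add_sub_cancel]⟩

theorem modPMatrix_eq_zero_of_lt (φ : (∀ i, ZMod (p ^ n i)) →+ ∀ i, ZMod (p ^ n i)) {i j : Fin k}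
    (h : n j < n i) : modPMatrix hn φ i j = 0 :=
  ZMod.castHom_eq_zero_of_nsmul_eq_zero h (congrFun (piZModHomEquiv _ _ φ j).2 i)

theorem card_modPMatrix_fiber {B : Matrix (Fin k) (Fin k) (ZMod p)}
    (hB : ∀ i j, n j < n i → B i j = 0) :
    Nat.card {φ : (∀ i, ZMod (p ^ n i)) →+ ∀ i, ZMod (p ^ n i) // modPMatrix hn φ = B} =
      ∏ j, ∏ i, if n i ≤ n j then p ^ (n i - 1) else p ^ n j := by
  let e : {φ : (∀ i, ZMod (p ^ n i)) →+ ∀ i, ZMod (p ^ n i) // modPMatrix hn φ = B} ≃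
      ∀ j i, {z : ZMod (p ^ n i) //
        p ^ n j • z = 0 ∧ ZMod.castHom (dvd_pow_self p (hn i)) (ZMod p) z = B i j} :=
    { toFun φ j i := ⟨φ.1 (Pi.single j 1) i, congrFun (piZModHomEquiv _ _ φ.1 j).2 i,
        congrFun (congrFun φ.2 i) j⟩
      invFun d := ⟨piZModLift fun j => ⟨fun i => (d j i).1, funext fun i => (d j i).2.1⟩,
        Matrix.ext fun i j => by
          rw [modPMatrix, Matrix.of_apply, piZModLift_single_one]
          exact (d j i).2.2⟩
      left_inv φ := Subtype.ext ((piZModHomEquiv _ _).symm_apply_apply φ.1)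
      right_inv d := funext fun j => funext fun i =>
        Subtype.ext (congrFun (piZModLift_single_one _ j) i) }
  rw [Nat.card_congr e, Nat.card_pi]
  refine prod_congr rfl fun j _ => ?_
  rw [Nat.card_pi]
  exact prod_congr rfl fun i _ => ZMod.card_nsmul_eq_zero_and_castHom_eq (hn i) (hB i j)

theorem card_isUnit_modPMatrix :
    Nat.card {φ : (∀ i, ZMod (p ^ n i)) →+ ∀ i, ZMod (p ^ n i) // IsUnit (modPMatrix hn φ)} =
      Nat.card {B : Matrix (Fin k) (Fin k) (ZMod p) // IsUnit B ∧ ∀ i j, n j < n i → B i j = 0} *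
        ∏ j, ∏ i, if n i ≤ n j then p ^ (n i - 1) else p ^ n j := by
  have : Finite ((∀ i, ZMod (p ^ n i)) →+ ∀ i, ZMod (p ^ n i)) := DFunLike.finite _
  rw [← Nat.card_subtype_comp_eq_mul (modPMatrix hn) fun B hB => card_modPMatrix_fiber hn hB.2]
  exact Nat.card_congr <| Equiv.subtypeEquivRight fun φ =>
    (and_iff_left fun _ _ h => modPMatrix_eq_zero_of_lt hn φ h).symm

end PrimePowerProduct

theorem card_addAut_pi_zmod_prime_pow {p k : ℕ} [Fact p.Prime] {n : Fin k → ℕ}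
    (hmono : Monotone n) (hn : ∀ i, n i ≠ 0) :
    Nat.card (AddAut (∀ i, ZMod (p ^ n i))) =
      (∏ j, (p ^ #{i | n i ≤ n j} - p ^ (j : ℕ))) *
        ∏ j, ∏ i, if n i ≤ n j then p ^ (n i - 1) else p ^ n j := by
  rw [Nat.card_addAut_eq_card_surjective,
    Nat.card_congr (Equiv.subtypeEquivRight (surjective_iff_isUnit_modPMatrix hn)),
    card_isUnit_modPMatrix, Matrix.card_isUnit_and_eq_zero_of_lt hmono, ZMod.card]

theorem prod_prod_ite_pow_eq {ι : Type*} [Fintype ι] (p : ℕ) (n : ι → ℕ) :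
    ∏ j, ∏ i, (if n i ≤ n j then p ^ (n i - 1) else p ^ n j) =
      (∏ j, p ^ (n j * #{i | n j < n i})) * ∏ i, p ^ ((n i - 1) * #{j | n i ≤ n j}) := by
  have hsplit (i j : ι) : (if n i ≤ n j then p ^ (n i - 1) else p ^ n j) =
      (if n j < n i then p ^ n j else 1) * (if n i ≤ n j then p ^ (n i - 1) else 1) := by
    rcases le_or_gt (n i) (n j) with h | h
    · simp [h, not_lt.2 h]
    · simp [h, not_le.2 h]
  simp_rw [hsplit, prod_mul_distrib]
  rw [prod_comm (f := fun j i => if n i ≤ n j then p ^ (n i - 1) else 1)]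
  simp_rw [← prod_filter, prod_const, ← pow_mul]

section LevelSets

variable {α : Type*} [LinearOrder α] {k : ℕ} {n : Fin k → α}

theorem sSup_eq_card_filter_le (hn : Monotone n) (r : Fin k) :
    sSup {m : ℕ | ∃ s : Fin k, n s = n r ∧ m = s + 1} = #{i | n i ≤ n r} := by
  set c := #{i | n i ≤ n r}
  have hmem (i : Fin k) : (i : ℕ) < c ↔ n i ≤ n r :=
    Fin.lt_card_filter_univ_iff_apply_of_imp _ fun _ _ hji hi => (hn hji).trans hi
  have hr := (hmem r).2 le_rfl
  have hk : c ≤ k := (card_filter_le _ _).trans_eq (card_fin k)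
  let s : Fin k := ⟨c - 1, by omega⟩
  have hs : n s = n r :=
    le_antisymm ((hmem s).1 (show c - 1 < c by omega)) (hn (Fin.le_def.2 (by simp [s]; omega)))
  refine IsGreatest.csSup_eq ⟨⟨s, hs, by simp [s]; omega⟩, ?_⟩
  rintro _ ⟨t, ht, rfl⟩
  exact (hmem t).2 ht.le

theorem sInf_eq_card_filter_lt_add_one (hn : Monotone n) (r : Fin k) :
    sInf {m : ℕ | ∃ s : Fin k, n s = n r ∧ m = s + 1} = #{i | n i < n r} + 1 := by
  set c := #{i | n i < n r}
  have hmem (i : Fin k) : (i : ℕ) < c ↔ n i < n r :=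
    Fin.lt_card_filter_univ_iff_apply_of_imp _ fun _ _ hji hi => (hn hji).trans_lt hi
  have hr : c ≤ r := not_lt.1 fun h => lt_irrefl _ ((hmem r).1 h)
  let s : Fin k := ⟨c, by omega⟩
  have hs : n s = n r :=
    eq_of_le_of_not_lt (hn (Fin.le_def.2 hr)) fun h => lt_irrefl c ((hmem s).2 h)
  refine IsLeast.csInf_eq ⟨⟨s, hs, rfl⟩, ?_⟩
  rintro _ ⟨t, ht, rfl⟩
  have : ¬ (t : ℕ) < c := fun h => ((hmem t).1 h).ne ht
  omega

end LevelSets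

theorem stmt_12_general (p : ℕ) (hp : p.Prime) (k : ℕ) (n : Fin k → ℕ)
    (hmono : Monotone n) (hpos : ∀ i, 1 ≤ n i) (a b : Fin k → ℕ)
    (ha : ∀ r, a r = sSup {m : ℕ | ∃ s : Fin k, n s = n r ∧ m = (s : ℕ) + 1})
    (hb : ∀ r, b r = sInf {m : ℕ | ∃ s : Fin k, n s = n r ∧ m = (s : ℕ) + 1}) :
    Nat.card (AddAut (∀ i : Fin k, ZMod (p ^ n i))) =
      (∏ i : Fin k, (p ^ a i - p ^ (i : ℕ))) *
      (∏ u : Fin k, p ^ (n u * (k - a u))) *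
      (∏ v : Fin k, p ^ ((n v - 1) * (k - b v + 1))) := by
  have := Fact.mk hp
  have hA (r : Fin k) : a r = #{i | n i ≤ n r} := (ha r).trans (sSup_eq_card_filter_le hmono r)
  have hgt (r : Fin k) : k - a r = #{i | n r < n i} := by
    have := card_filter_add_card_filter_not (s := univ) fun i => n i ≤ n r
    simp only [not_le, card_univ, Fintype.card_fin] at this
    rw [hA r]
    omega
  have hge (r : Fin k) : k - b r + 1 = #{i | n r ≤ n i} := by
    have := card_filter_add_card_filter_not (s := univ) fun i => n i < n r
    have hr : 0 < #{i | n r ≤ n i} := card_pos.2 ⟨r, by simp⟩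
    simp only [not_lt, card_univ, Fintype.card_fin] at this
    rw [(hb r).trans (sInf_eq_card_filter_lt_add_one hmono r)]
    omega
  rw [card_addAut_pi_zmod_prime_pow hmono fun i => Nat.one_le_iff_ne_zero.mp (hpos i),
    prod_prod_ite_pow_eq, ← mul_assoc]
  simp_rw [hgt, hge, hA]

/-- Let `p` be a prime and `G ≅ ∏_{i=1}^{k} ℤ_{p^{n_i}}` a finite abelian `p`-group,
where `1 ≤ n₁ ≤ ... ≤ n_k`. With `a_r = max{s | n_s = n_r}` and `b_r = min{s | n_s = n_r}`
(indices taken in `{1, ..., k}`), we have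
`|Aut(G)| = ∏_i (p^{a_i} − p^{i−1}) · ∏_u p^{n_u(k − a_u)} · ∏_v p^{(n_v−1)(k − b_v + 1)}`.
Here `Fin k` models the index set, with `i : Fin k` corresponding to the index `i + 1`. -/
theorem stmt_12 (p : ℕ) (hp : p.Prime) (k : ℕ) (hk : 0 < k) (n : Fin k → ℕ)
    (hmono : Monotone n) (hpos : ∀ i, 1 ≤ n i) (a b : Fin k → ℕ)
    (ha : ∀ r, a r = sSup {m : ℕ | ∃ s : Fin k, n s = n r ∧ m = (s : ℕ) + 1})
    (hb : ∀ r, b r = sInf {m : ℕ | ∃ s : Fin k, n s = n r ∧ m = (s : ℕ) + 1}) :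
    Nat.card (AddAut (∀ i : Fin k, ZMod (p ^ n i))) =
      (∏ i : Fin k, (p ^ a i - p ^ (i : ℕ))) *
      (∏ u : Fin k, p ^ (n u * (k - a u))) *
      (∏ v : Fin k, p ^ ((n v - 1) * (k - b v + 1))) :=
  stmt_12_general p hp k n hmono hpos a b ha hb
end

section
/- Let p be a prime and let G be a non-cyclic abelian p-group of order pⁿ. Then |Aut(G)| ≥ pⁿ · (p−1)². -/
/-!
Split `G ≅ ℤ/p^e × C` with `e ≥ 1`; as `G` is not cyclic, `C` is a nontrivial `p`-group, of
order `p^c` say. Distinct quadruples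
`(α, β, ψ, φ) ∈ Aut(ℤ/p^e) × Aut C × Hom(C, ℤ/p^e) × Hom(ℤ/p^e, C)` give distinct automorphisms
`(x, y) ↦ (α x + ψ y', y')`, `y' = β (y + φ x)`, of the product. Both `Hom` groups have at least
`p` elements, and the same splitting, by induction on the order, gives `|Aut C| ≥ p^(c-1) (p-1)`.
Hence `|Aut G| ≥ p^(e-1) (p-1) · p^(c-1) (p-1) · p · p = p^n (p-1)²`.
-/

open Function

instance AddMonoidHom.finite {A B : Type*} [AddZeroClass A] [AddZeroClass B] [Finite A]
    [Finite B] : Finite (A →+ B) :=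
  Finite.of_injective _ DFunLike.coe_injective

section Shear

variable {A B : Type*} [AddCommGroup A] [AddCommGroup B]

def AddEquiv.shearFst (ψ : B →+ A) : (A × B) ≃+ (A × B) where
  toFun z := (z.1 + ψ z.2, z.2)
  invFun z := (z.1 - ψ z.2, z.2)
  left_inv z := by simp
  right_inv z := by simp
  map_add' z w := by ext <;> simp [add_add_add_comm]

def AddEquiv.shearSnd (φ : A →+ B) : (A × B) ≃+ (A × B) where
  toFun z := (z.1, z.2 + φ z.1)
  invFun z := (z.1, z.2 - φ z.1)
  left_inv z := by simp
  right_inv z := by simp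
  map_add' z w := by ext <;> simp [add_add_add_comm]

def AddEquiv.prodBlock (q : AddAut A × AddAut B × (B →+ A) × (A →+ B)) : AddAut (A × B) :=
  ((AddEquiv.shearSnd q.2.2.2).trans (AddEquiv.prodCongr q.1 q.2.1)).trans
    (AddEquiv.shearFst q.2.2.1)

lemma AddEquiv.prodBlock_apply (q : AddAut A × AddAut B × (B →+ A) × (A →+ B)) (z : A × B) :
    prodBlock q z =
      (q.1 z.1 + q.2.2.1 (q.2.1 (z.2 + q.2.2.2 z.1)), q.2.1 (z.2 + q.2.2.2 z.1)) :=
  rfl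

lemma AddEquiv.prodBlock_injective :
    Injective (prodBlock : AddAut A × AddAut B × (B →+ A) × (A →+ B) → AddAut (A × B)) := by
  rintro ⟨α, β, ψ, φ⟩ ⟨α', β', ψ', φ'⟩ h
  have hz (z : A × B) := DFunLike.congr_fun h z
  obtain rfl : β = β' := by
    ext y
    simpa [prodBlock_apply] using congrArg Prod.snd (hz (0, y))
  obtain rfl : ψ = ψ' := by
    ext y
    simpa [prodBlock_apply] using congrArg Prod.fst (hz (0, β.symm y))
  obtain rfl : φ = φ' := by
    ext x
    simpa [prodBlock_apply] using β.injective (congrArg Prod.snd (hz (x, 0)))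
  obtain rfl : α = α' := by
    ext x
    simpa [prodBlock_apply] using congrArg Prod.fst (hz (x, 0))
  rfl

lemma card_addAut_mul_card_addAut_mul_le_card_addAut_prod [Finite A] [Finite B] :
    Nat.card (AddAut A) * Nat.card (AddAut B) * Nat.card (B →+ A) * Nat.card (A →+ B) ≤
      Nat.card (AddAut (A × B)) := by
  simpa only [Nat.card_prod, mul_assoc] using
    Nat.card_le_card_of_injective _ AddEquiv.prodBlock_injective

end Shear

section Homs

variable {N : Type*} [AddCommGroup N] [Finite N]

lemma card_le_card_zmod_addMonoidHom {q : ℕ} [NeZero q] (H : AddSubgroup N)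
    (hH : ∀ y ∈ H, q • y = 0) :
    Nat.card H ≤ Nat.card (ZMod q →+ N) := by
  refine Nat.card_le_card_of_injective
    (fun y : H => ZMod.lift q ⟨zmultiplesHom N y, by simpa using hH y y.2⟩) fun y y' h => ?_
  have := DFunLike.congr_fun h ((1 : ℤ) : ZMod q)
  rw [ZMod.lift_coe, ZMod.lift_coe] at this
  exact Subtype.ext (by simpa using this)

lemma le_card_zmod_addMonoidHom {p q : ℕ} [NeZero q] (hp : p.Prime) (hq : p ∣ q)
    (hN : p ∣ Nat.card N) :
    p ≤ Nat.card (ZMod q →+ N) := by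
  have : Fact p.Prime := ⟨hp⟩
  obtain ⟨x, hx⟩ := exists_prime_addOrderOf_dvd_card' p hN
  calc p = Nat.card (AddSubgroup.zmultiples x) := by rw [Nat.card_zmultiples, hx]
    _ ≤ _ := card_le_card_zmod_addMonoidHom _ fun y hy => by
      obtain ⟨k, rfl⟩ := AddSubgroup.mem_zmultiples_iff.mp hy
      rw [smul_comm, addOrderOf_dvd_iff_nsmul_eq_zero.mp (hx ▸ hq), smul_zero]

lemma card_addMonoidHom_le_of_surjective {A B : Type*} [AddCommGroup A] [AddCommGroup B]
    [Finite A] (f : A →+ B) (hf : Surjective f) : Nat.card (B →+ N) ≤ Nat.card (A →+ N) :=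
  Nat.card_le_card_of_injective (fun g => g.comp f) fun _ _ h => (AddMonoidHom.cancel_right hf).mp h

end Homs

def AddEquiv.piSplitAt {ι : Type*} [DecidableEq ι] (i : ι) (f : ι → Type*)
    [∀ j, AddCommGroup (f j)] : (∀ j, f j) ≃+ f i × (∀ j : {j // j ≠ i}, f j) :=
  { Equiv.piSplitAt i f with map_add' := fun _ _ => rfl }

lemma AddCommGroup.exists_addEquiv_zmod_prod (B : Type*) [AddCommGroup B] [Finite B]
    [Nontrivial B] :
    ∃ (q : ℕ) (C : Type) (_ : AddCommGroup C), 1 < q ∧ Nonempty (B ≃+ ZMod q × C) := by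
  classical
  obtain ⟨ι, _, n, hn, ⟨e⟩⟩ := equiv_directSum_zmod_of_finite' B
  obtain ⟨i⟩ : Nonempty ι := by
    by_contra! hι
    exact not_subsingleton B e.subsingleton
  refine ⟨n i, _, _, hn i, ⟨(e.trans (DirectSum.addEquivProd _)).trans (AddEquiv.piSplitAt i _)⟩⟩

lemma AddCommGroup.exists_addEquiv_zmod_pow_prod {B : Type*} [AddCommGroup B] [Finite B] {p m : ℕ}
    (hp : p.Prime) (hB : Nat.card B = p ^ m) (hm : m ≠ 0) :
    ∃ (e c : ℕ) (C : Type) (_ : AddCommGroup C) (_ : Finite C),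
      e ≠ 0 ∧ e + c = m ∧ Nat.card C = p ^ c ∧ Nonempty (B ≃+ ZMod (p ^ e) × C) := by
  have : Nontrivial B := Finite.one_lt_card_iff_nontrivial.mp <| by
    rw [hB]; exact Nat.one_lt_pow hm hp.one_lt
  obtain ⟨q, C, _, hq, ⟨f⟩⟩ := exists_addEquiv_zmod_prod B
  have hcard : q * Nat.card C = p ^ m := by
    rw [← hB, Nat.card_congr f.toEquiv, Nat.card_prod, Nat.card_zmod]
  obtain ⟨e, -, rfl⟩ := (Nat.dvd_prime_pow hp).mp (Dvd.intro _ hcard)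
  obtain ⟨c, -, hc⟩ := (Nat.dvd_prime_pow hp).mp (Dvd.intro_left _ hcard)
  have : Finite C := Nat.finite_of_card_ne_zero (by rw [hc]; exact pow_ne_zero _ hp.ne_zero)
  refine ⟨e, c, C, _, this, ?_, ?_, hc, ⟨f⟩⟩
  · rintro rfl
    simp at hq
  · rw [hc, ← pow_add] at hcard
    exact Nat.pow_right_injective hp.two_le hcard

lemma card_addAut_zmod (q : ℕ) [NeZero q] : Nat.card (AddAut (ZMod q)) = q.totient := by
  rw [Nat.card_congr ((ZMod.AddAutEquivUnits q).toEquiv.trans Additive.toMul),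
    Nat.card_eq_fintype_card, ZMod.card_units_eq_totient]

lemma totient_mul_le_card_addAut {B C : Type*} [AddCommGroup B] [AddCommGroup C] [Finite C]
    {q : ℕ} [NeZero q] (f : B ≃+ ZMod q × C) :
    q.totient * Nat.card (AddAut C) * Nat.card (C →+ ZMod q) * Nat.card (ZMod q →+ C) ≤
      Nat.card (AddAut B) := by
  rw [← card_addAut_zmod, Nat.card_congr (AddAut.congr f).toEquiv]
  exact card_addAut_mul_card_addAut_mul_le_card_addAut_prod

lemma le_card_addMonoidHom_zmod {C : Type*} [AddCommGroup C] [Finite C] {p c q : ℕ} [NeZero q]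
    (hp : p.Prime) (hC : Nat.card C = p ^ c) (hc : c ≠ 0) (hq : p ∣ q) :
    p ≤ Nat.card (C →+ ZMod q) := by
  have : NeZero p := ⟨hp.ne_zero⟩
  obtain ⟨e, -, D, _, _, he, -, -, ⟨f⟩⟩ := AddCommGroup.exists_addEquiv_zmod_pow_prod hp hC hc
  calc p ≤ Nat.card (ZMod (p ^ e) →+ ZMod q) :=
        le_card_zmod_addMonoidHom hp (dvd_pow_self p he) (by rwa [Nat.card_zmod])
    _ ≤ Nat.card (C →+ ZMod q) :=
        card_addMonoidHom_le_of_surjective ((AddMonoidHom.fst _ _).comp f.toAddMonoidHom)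
          (Prod.fst_surjective.comp f.surjective)

-- `B : Type`, not `Type*`: the induction hypothesis is applied to the complement `C : Type`.
lemma pow_pred_mul_le_card_addAut {B : Type} [AddCommGroup B] [Finite B] {p m : ℕ}
    (hp : p.Prime) (hB : Nat.card B = p ^ m) (hm : m ≠ 0) :
    p ^ (m - 1) * (p - 1) ≤ Nat.card (AddAut B) := by
  induction m using Nat.strong_induction_on generalizing B with
  | _ m ih =>
  have : NeZero p := ⟨hp.ne_zero⟩
  obtain ⟨e, c, C, _, _, he, rfl, hC, ⟨f⟩⟩ := AddCommGroup.exists_addEquiv_zmod_pow_prod hp hB hm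
  refine le_trans ?_ (totient_mul_le_card_addAut f)
  rw [Nat.totient_prime_pow hp (Nat.pos_of_ne_zero he)]
  rcases Nat.eq_zero_or_pos c with rfl | hc
  · have hAutC : 1 ≤ Nat.card (AddAut C) := Nat.card_pos
    have hHomCA : 1 ≤ Nat.card (C →+ ZMod (p ^ e)) := Nat.card_pos
    have hHomAC : 1 ≤ Nat.card (ZMod (p ^ e) →+ C) := Nat.card_pos
    calc p ^ (e + 0 - 1) * (p - 1) = p ^ (e - 1) * (p - 1) * 1 * 1 * 1 := by simp
      _ ≤ _ := by gcongr
  · have hAutC := ih c (by omega) hC hc.ne'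
    have hHomAC : p ≤ Nat.card (ZMod (p ^ e) →+ C) :=
      le_card_zmod_addMonoidHom hp (dvd_pow_self p he) (hC ▸ dvd_pow_self p hc.ne')
    have hHomCA : 1 ≤ Nat.card (C →+ ZMod (p ^ e)) := Nat.card_pos
    have hp1 : 1 ≤ p - 1 := Nat.le_sub_one_of_lt hp.one_lt
    calc p ^ (e + c - 1) * (p - 1) = p ^ (e - 1) * p ^ (c - 1) * p * (p - 1) * 1 := by
          rw [show e + c - 1 = (e - 1) + (c - 1) + 1 by omega, pow_add, pow_add]; ring
      _ ≤ p ^ (e - 1) * p ^ (c - 1) * p * (p - 1) * (p - 1) := by gcongr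
      _ = p ^ (e - 1) * (p - 1) * (p ^ (c - 1) * (p - 1)) * 1 * p := by ring
      _ ≤ _ := by gcongr

lemma le_card_addAut_of_not_isAddCyclic {B : Type*} [AddCommGroup B] [Finite B] {p n : ℕ}
    (hp : p.Prime) (hB : Nat.card B = p ^ n) (hcyc : ¬ IsAddCyclic B) :
    p ^ n * (p - 1) ^ 2 ≤ Nat.card (AddAut B) := by
  have hn : n ≠ 0 := by
    rintro rfl
    have : Subsingleton B := (Nat.card_eq_one_iff_unique.mp hB).1
    exact hcyc inferInstance
  obtain ⟨e, c, C, _, _, he, rfl, hC, ⟨f⟩⟩ := AddCommGroup.exists_addEquiv_zmod_pow_prod hp hB hn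
  have hc : c ≠ 0 := by
    rintro rfl
    obtain ⟨_, ⟨c₀⟩⟩ := Nat.card_eq_one_iff_unique.mp (by simpa using hC)
    have : Unique C := uniqueOfSubsingleton c₀
    exact hcyc ((f.trans AddEquiv.prodUnique).isAddCyclic.mpr inferInstance)
  have : NeZero p := ⟨hp.ne_zero⟩
  refine le_trans ?_ (totient_mul_le_card_addAut f)
  rw [Nat.totient_prime_pow hp (Nat.pos_of_ne_zero he)]
  have hAutC := pow_pred_mul_le_card_addAut hp hC hc
  have hHomCA := le_card_addMonoidHom_zmod hp hC hc (dvd_pow_self p he)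
  have hHomAC : p ≤ Nat.card (ZMod (p ^ e) →+ C) :=
    le_card_zmod_addMonoidHom hp (dvd_pow_self p he) (hC ▸ dvd_pow_self p hc)
  calc p ^ (e + c) * (p - 1) ^ 2 = p ^ (e - 1) * (p - 1) * (p ^ (c - 1) * (p - 1)) * p * p := by
        rw [show e + c = (e - 1) + (c - 1) + 1 + 1 by omega, pow_add, pow_add, pow_add]; ring
    _ ≤ _ := by gcongr

/-- Let `p` be a prime and `G` a non-cyclic abelian `p`-group of order `pⁿ`.
Then `|Aut(G)| ≥ pⁿ (p−1)²`. -/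
theorem stmt_14 (p n : ℕ) (hp : p.Prime) (G : Type*) [CommGroup G] [Finite G]
    (hcard : Nat.card G = p ^ n) (h : ¬ IsCyclic G) :
    p ^ n * (p - 1) ^ 2 ≤ Nat.card (MulAut G) := by
  rw [Nat.card_congr MulEquiv.toAdditive]
  exact le_card_addAut_of_not_isAddCyclic hp hcard (by rwa [isAddCyclic_additive_iff])
end

section
/- Let G be a finite abelian group. Then |Aut(G)| ≥ φ(|G|), where φ is Euler's totient function, and equality holds if and only if G is cyclic. -/
/-!
Let `n` be the exponent of `G` and `x` an element of order `n`. The cyclic group `K = ⟨x⟩` has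
enough `n`-th roots of unity, so the identity of `K` extends to a homomorphism `G → K`, and
`G ≃ K × H` with `exp H ∣ |K|`. Then the primes dividing `|H|` divide `|K|`, hence
`φ(|G|) = φ(|K|) · |H| = |Aut K| · |Hom(H, K)|`, which counts the automorphisms
`(a, b) ↦ (σ a · f b, b)` of `K × H`. If `G` is not cyclic then `H ≠ 1`, and a nontrivial
`g : K → H` gives the automorphism `(a, b) ↦ (a, g a · b)`, which is not of that form.
-/

theorem Nat.totient_mul_of_primeFactors_subset {m n : ℕ} (h : m.primeFactors ⊆ n.primeFactors) :
    (n * m).totient = n.totient * m := by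
  rcases eq_or_ne m 0 with rfl | hm
  · simp
  rcases eq_or_ne n 0 with rfl | hn
  · simp
  have hP : 0 < ∏ p ∈ n.primeFactors, p := Finset.prod_pos fun p hp => pos_of_mem_primeFactors hp
  have hprimes : (n * m).primeFactors = n.primeFactors := by
    rw [Nat.primeFactors_mul hn hm, Finset.union_eq_left.mpr h]
  refine Nat.eq_of_mul_eq_mul_right hP ?_
  have hnm := totient_mul_prod_primeFactors (n * m)
  rw [hprimes] at hnm
  rw [hnm, mul_right_comm n, mul_right_comm n.totient, totient_mul_prod_primeFactors]

theorem Group.primeFactors_natCard_subset_exponent (G : Type*) [Group G] [Finite G] :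
    (Nat.card G).primeFactors ⊆ (Monoid.exponent G).primeFactors := by
  intro q hq
  have hqp := Nat.prime_of_mem_primeFactors hq
  have : Fact q.Prime := ⟨hqp⟩
  obtain ⟨x, hx⟩ := exists_prime_orderOf_dvd_card' q (Nat.dvd_of_mem_primeFactors hq)
  exact Nat.mem_primeFactors.mpr
    ⟨hqp, hx ▸ Monoid.order_dvd_exponent x, Monoid.exponent_ne_zero_of_finite⟩

instance IsCyclic.hasEnoughRootsOfUnity (C : Type*) [CommGroup C] [Finite C] [IsCyclic C] :
    HasEnoughRootsOfUnity C (Nat.card C) where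
  prim := by
    obtain ⟨c, hc⟩ := IsCyclic.exists_ofOrder_eq_natCard (α := C)
    exact ⟨c, hc ▸ IsPrimitiveRoot.orderOf c⟩
  cyc := by
    have : IsCyclic Cˣ := isCyclic_of_surjective toUnits toUnits.surjective
    infer_instance

theorem IsCyclic.card_monoidHom_of_exponent_dvd {H C : Type*} [CommGroup H] [Finite H]
    [CommGroup C] [Finite C] [IsCyclic C] (h : Monoid.exponent H ∣ Nat.card C) :
    Nat.card (H →* C) = Nat.card H := by
  have : NeZero (Nat.card C) := ⟨Nat.card_pos.ne'⟩
  have : HasEnoughRootsOfUnity C (Monoid.exponent H) := .of_dvd C h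
  rw [← CommGroup.card_monoidHom_of_hasEnoughRootsOfUnity H C]
  exact Nat.card_congr (MulEquiv.monoidHomCongrRight toUnits).toEquiv

theorem IsCyclic.exists_monoidHom_ne_one {C H : Type*} [Group C] [IsCyclic C] [Group H]
    [Nontrivial H] (h : Monoid.exponent H ∣ Nat.card C) : ∃ f : C →* H, f ≠ 1 := by
  obtain ⟨c, hc⟩ := IsCyclic.exists_generator (α := C)
  obtain ⟨x, hx⟩ := exists_ne (1 : H)
  refine ⟨monoidHomOfForallMemZpowers hc (g' := x) ?_, fun hf => hx ?_⟩
  · exact orderOf_eq_card_of_forall_mem_zpowers hc ▸ (Monoid.order_dvd_exponent x).trans h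
  · simpa using DFunLike.congr_fun hf c

theorem IsCyclic.totient_natCard_prod {C H : Type*} [CommGroup C] [Finite C] [IsCyclic C]
    [CommGroup H] [Finite H] (h : Monoid.exponent H ∣ Nat.card C) :
    (Nat.card (C × H)).totient = Nat.card (MulAut C) * Nat.card (H →* C) := by
  rw [Nat.card_prod, Nat.totient_mul_of_primeFactors_subset, IsCyclic.card_mulAut,
    card_monoidHom_of_exponent_dvd h]
  exact (Group.primeFactors_natCard_subset_exponent H).trans
    (Nat.primeFactors_mono h Nat.card_pos.ne')

namespace MulAut

variable {A B : Type*}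

def prodUpper [CommGroup A] [Group B] (σ : MulAut A) (f : B →* A) : MulAut (A × B) where
  toFun x := (σ x.1 * f x.2, x.2)
  invFun x := (σ.symm (x.1 * (f x.2)⁻¹), x.2)
  left_inv x := by simp
  right_inv x := by simp
  map_mul' x y := by
    ext
    · simp [mul_mul_mul_comm]
    · rfl

def prodLower [Group A] [CommGroup B] (g : A →* B) : MulAut (A × B) where
  toFun x := (x.1, g x.1 * x.2)
  invFun x := (x.1, (g x.1)⁻¹ * x.2)
  left_inv x := by simp
  right_inv x := by simp
  map_mul' x y := by
    ext
    · rfl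
    · simp [mul_mul_mul_comm]

@[simp]
theorem prodUpper_apply [CommGroup A] [Group B] (σ : MulAut A) (f : B →* A) (x : A × B) :
    prodUpper σ f x = (σ x.1 * f x.2, x.2) := rfl

@[simp]
theorem prodLower_apply [Group A] [CommGroup B] (g : A →* B) (x : A × B) :
    prodLower g x = (x.1, g x.1 * x.2) := rfl

theorem prodUpper_injective [CommGroup A] [Group B] :
    Function.Injective fun p : MulAut A × (B →* A) => prodUpper p.1 p.2 := by
  rintro ⟨σ, f⟩ ⟨σ', f'⟩ h
  have happ := DFunLike.congr_fun h
  ext a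
  · simpa using congrArg Prod.fst (happ (a, 1))
  · simpa using congrArg Prod.fst (happ (1, a))

theorem prodUpper_ne_prodLower [CommGroup A] [CommGroup B] {g : A →* B} (hg : g ≠ 1)
    (σ : MulAut A) (f : B →* A) : prodUpper σ f ≠ prodLower g := by
  intro h
  refine hg (MonoidHom.ext fun a => ?_)
  simpa using (congrArg Prod.snd (DFunLike.congr_fun h (a, 1))).symm

theorem card_mul_card_monoidHom_lt_card_prod [CommGroup A] [CommGroup B] [Finite A] [Finite B]
    {g : A →* B} (hg : g ≠ 1) :
    Nat.card (MulAut A) * Nat.card (B →* A) < Nat.card (MulAut (A × B)) := by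
  classical
  have : Finite (B →* A) := .of_injective _ DFunLike.coe_injective
  have : Fintype (MulAut A × (B →* A)) := Fintype.ofFinite _
  have : Fintype (MulAut (A × B)) := Fintype.ofFinite _
  rw [← Nat.card_prod, Nat.card_eq_fintype_card, Nat.card_eq_fintype_card]
  exact Fintype.card_lt_of_injective_of_notMem _ prodUpper_injective (b := prodLower g)
    (by rintro ⟨⟨σ, f⟩, h⟩; exact prodUpper_ne_prodLower hg σ f h)

end MulAut

def MonoidHom.prodKerEquivOfLeftInverse {G A : Type*} [CommGroup G] [Group A] (ρ : G →* A)
    (s : A →* G) (hs : Function.LeftInverse ρ s) : G ≃* A × ρ.ker where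
  toFun x := (ρ x, ⟨x * (s (ρ x))⁻¹, by simp [hs (ρ x)]⟩)
  invFun y := s y.1 * y.2
  left_inv x := by simp
  right_inv y := by
    have hy : ρ y.2 = 1 := y.2.2
    ext
    · simp [hs y.1, hy]
    · simp [hs y.1, hy]
  map_mul' x y := by
    ext
    · simp
    · simp only [map_mul, mul_inv]
      exact mul_mul_mul_comm _ _ _ _

theorem CommGroup.exists_isCyclic_card_eq_exponent_mulEquiv_prod (G : Type*) [CommGroup G]
    [Finite G] :
    ∃ K H : Subgroup G, IsCyclic K ∧ Nat.card K = Monoid.exponent G ∧ Nonempty (G ≃* K × H) := by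
  obtain ⟨g, hg⟩ := Monoid.exists_orderOf_eq_exponent (Monoid.ExponentExists.of_finite (G := G))
  set K := Subgroup.zpowers g
  have hK : Nat.card K = Monoid.exponent G := (Nat.card_zpowers g).trans hg
  have : HasEnoughRootsOfUnity K (Monoid.exponent G) := by
    rw [← hK]; infer_instance
  obtain ⟨χ, hχ⟩ := MonoidHom.domRestrict_surjective K K (toUnits : K ≃* Kˣ).toMonoidHom
  let ρ : G →* K := toUnits.symm.toMonoidHom.comp χ
  have hρ : Function.LeftInverse ρ K.subtype := fun k => by
    simp [ρ, show χ k = toUnits k from DFunLike.congr_fun hχ k]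
  exact ⟨K, ρ.ker, inferInstance, hK, ⟨ρ.prodKerEquivOfLeftInverse K.subtype hρ⟩⟩

/-- Let `G` be a finite abelian group. Then `|Aut(G)| ≥ φ(|G|)`, with equality
if and only if `G` is cyclic. -/
theorem stmt_15 (G : Type*) [CommGroup G] [Finite G] :
    Nat.totient (Nat.card G) ≤ Nat.card (MulAut G) ∧
      (Nat.card (MulAut G) = Nat.totient (Nat.card G) ↔ IsCyclic G) := by
  by_cases hG : IsCyclic G
  · exact ⟨(IsCyclic.card_mulAut G).ge, iff_of_true (IsCyclic.card_mulAut G) hG⟩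
  obtain ⟨K, H, _, hK, ⟨e⟩⟩ := CommGroup.exists_isCyclic_card_eq_exponent_mulEquiv_prod G
  have hH : Monoid.exponent H ∣ Nat.card K :=
    hK ▸ H.exponent_toSubmonoid ▸ Monoid.exponent_submonoid_dvd H.toSubmonoid
  have : Nontrivial H := by
    by_contra hH1
    rw [not_nontrivial_iff_subsingleton] at hH1
    have : Unique H := uniqueOfSubsingleton 1
    exact hG (isCyclic_of_surjective _ (e.trans MulEquiv.prodUnique).symm.surjective)
  obtain ⟨g, hg⟩ := IsCyclic.exists_monoidHom_ne_one (C := K) hH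
  have hlt : (Nat.card G).totient < Nat.card (MulAut G) := by
    rw [Nat.card_congr e.toEquiv, Nat.card_congr (MulAut.congr e).toEquiv,
      IsCyclic.totient_natCard_prod hH]
    exact MulAut.card_mul_card_monoidHom_lt_card_prod hg
  exact ⟨hlt.le, iff_of_false hlt.ne' hG⟩
end

section
/- For every prime p, f(Z_p × Z_p) = 1 + (p+1)(p−1)²/p; equivalently, S(Z_p × Z_p) = p² + p·(p+1)(p−1)². -/
open Finset

theorem card_addAut_eq_card_linearEquiv_zmod (n : ℕ) (M : Type*) [AddCommGroup M]
    [Module (ZMod n) M] : Nat.card (AddAut M) = Nat.card (M ≃ₗ[ZMod n] M) :=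
  Nat.card_congr
    { toFun := fun e => { e with map_smul' := ZMod.map_smul e.toAddMonoidHom }
      invFun := LinearEquiv.toAddEquiv
      left_inv := fun _ => rfl
      right_inv := fun _ => rfl }

theorem card_linearEquiv_self {F V : Type*} [Field F] [Fintype F] [AddCommGroup V] [Module F V]
    [FiniteDimensional F V] {n : ℕ} (hn : Module.finrank F V = n) :
    Nat.card (V ≃ₗ[F] V) = ∏ i : Fin n, (Fintype.card F ^ n - Fintype.card F ^ (i : ℕ)) := by
  subst hn
  let e := (Module.finBasis F V).equivFun
  rw [← Matrix.card_GL_field, Nat.card_congr ((Matrix.GeneralLinearGroup.toLin.trans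
    ((LinearMap.GeneralLinearGroup.congrLinearEquiv e.symm).trans
      (LinearMap.GeneralLinearGroup.generalLinearEquiv F V))).toEquiv)]

theorem card_mulAut_multiplicative_zmod_prod (p : ℕ) [Fact p.Prime] :
    Nat.card (MulAut (Multiplicative (ZMod p × ZMod p))) = (p ^ 2 - 1) * (p ^ 2 - p) := by
  rw [Nat.card_congr (MulAutMultiplicative _).toEquiv, Nat.card_congr Multiplicative.toAdd,
    card_addAut_eq_card_linearEquiv_zmod p,
    card_linearEquiv_self (n := 2) (by simp [Module.finrank_prod])]
  simp [Fin.prod_univ_two, ZMod.card]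

section PrimeOrder

variable {G : Type*} [Group G] [Finite G] {p : ℕ}

theorem Subgroup.zpowers_eq_iff_of_card_eq_prime (hp : p.Prime) {H : Subgroup G}
    (hH : Nat.card H = p) {g : G} : Subgroup.zpowers g = H ↔ g ∈ H ∧ g ≠ 1 := by
  constructor
  · rintro rfl
    refine ⟨Subgroup.mem_zpowers g, fun hg => hp.one_lt.ne ?_⟩
    rw [← hH, Nat.card_zpowers, hg, orderOf_one]
  · rintro ⟨hgH, hg⟩
    have hdvd : orderOf g ∣ p := hH ▸ Subgroup.orderOf_dvd_natCard H hgH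
    refine Subgroup.eq_of_le_of_card_ge (Subgroup.zpowers_le.mpr hgH) ?_
    rw [hH, Nat.card_zpowers, ((Nat.dvd_prime hp).mp hdvd).resolve_left (by simpa using hg)]

theorem card_orderOf_eq_prime_eq_card_subgroups_mul (hp : p.Prime) :
    Nat.card {g : G // orderOf g = p} = Nat.card {H : Subgroup G // Nat.card H = p} * (p - 1) := by
  classical
  have := Fintype.ofFinite G
  have := Fintype.ofFinite (Subgroup G)
  have hfiber : ∀ H ∈ ({H | Nat.card H = p} : Finset (Subgroup G)),
      #{g | orderOf g = p ∧ Subgroup.zpowers g = H} = p - 1 := by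
    intro H hH
    rw [mem_filter_univ] at hH
    have hgen : ({g | orderOf g = p ∧ Subgroup.zpowers g = H} : Finset G) =
        (univ.filter (· ∈ H)).erase 1 := by
      ext g
      have horder : Subgroup.zpowers g = H → orderOf g = p := fun h => by
        rw [← hH, ← h, Nat.card_zpowers]
      simp only [mem_filter_univ, mem_erase]
      rw [and_iff_right_of_imp horder, Subgroup.zpowers_eq_iff_of_card_eq_prime hp hH, and_comm]
    rw [hgen, card_erase_of_mem (by simp), ← hH, Nat.card_eq_fintype_card, Fintype.card_subtype]
  rw [Nat.card_eq_fintype_card (α := {g : G // _}), Fintype.card_subtype,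
    Nat.card_eq_fintype_card (α := {H : Subgroup G // _}), Fintype.card_subtype,
    card_eq_sum_card_fiberwise (f := Subgroup.zpowers) (t := {H | Nat.card H = p})
      (fun g hg => by simpa [Fintype.card_zpowers] using hg)]
  simp only [filter_filter]
  rw [sum_const_nat hfiber]

theorem card_orderOf_eq_prime_of_forall_pow_eq_one (hp : p.Prime) (h : ∀ g : G, g ^ p = 1) :
    Nat.card {g : G // orderOf g = p} = Nat.card G - 1 := by
  classical
  have := Fact.mk hp
  have := Fintype.ofFinite G
  simp_rw [orderOf_eq_prime_iff, h, true_and, Nat.card_eq_fintype_card]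
  exact Set.card_ne_eq (1 : G)

theorem Subgroup.eq_bot_or_eq_top_or_card_eq_prime (hp : p.Prime) (hG : Nat.card G = p ^ 2)
    (H : Subgroup G) : H = ⊥ ∨ H = ⊤ ∨ Nat.card H = p := by
  obtain ⟨k, hk, hcard⟩ := (Nat.dvd_prime_pow hp).mp (hG ▸ H.card_subgroup_dvd_card)
  interval_cases k
  · exact .inl (Subgroup.card_eq_one.mp (by simpa using hcard))
  · exact .inr (.inr (by simpa using hcard))
  · exact .inr (.inl (H.eq_top_of_card_eq (hcard.trans hG.symm)))

theorem finsum_subgroups_of_card_eq_prime_sq (hp : p.Prime) (hG : Nat.card G = p ^ 2)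
    {M : Type*} [AddCommMonoid M] (f : Subgroup G → M) {c : M}
    (hf : ∀ H : Subgroup G, Nat.card H = p → f H = c) :
    ∑ᶠ H, f H = f ⊥ + f ⊤ + Nat.card {H : Subgroup G // Nat.card H = p} • c := by
  classical
  have := Fintype.ofFinite (Subgroup G)
  have hp_lt : p < p ^ 2 := lt_self_pow₀ hp.one_lt one_lt_two
  have : Nontrivial G := Finite.one_lt_card_iff_nontrivial.mp (hG ▸ hp.one_lt.trans hp_lt)
  have hbot : (⊥ : Subgroup G) ∉ insert ⊤ ({H | Nat.card H = p} : Finset (Subgroup G)) := by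
    simpa [Subgroup.card_bot] using hp.one_lt.ne
  have htop : (⊤ : Subgroup G) ∉ ({H | Nat.card H = p} : Finset (Subgroup G)) := by
    simpa [Subgroup.card_top, hG] using hp_lt.ne'
  have huniv : (univ : Finset (Subgroup G)) =
      insert ⊥ (insert ⊤ ({H | Nat.card H = p} : Finset (Subgroup G))) := by
    ext H
    simpa using Subgroup.eq_bot_or_eq_top_or_card_eq_prime hp hG H
  rw [finsum_eq_sum_of_fintype, huniv, sum_insert hbot, sum_insert htop,
    sum_congr rfl fun H hH => hf H (by simpa using hH), sum_const, add_assoc,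
    Nat.card_eq_fintype_card (α := {H : Subgroup G // _}), Fintype.card_subtype]

end PrimeOrder

/-- For every prime `p`, `f(ℤ_p × ℤ_p) = 1 + (p+1)(p−1)²/p`, i.e.
`S(ℤ_p × ℤ_p) = p² + p(p+1)(p−1)²`. -/
theorem stmt_17 (p : ℕ) (hp : p.Prime) :
    S (Multiplicative (ZMod p × ZMod p)) = p ^ 2 + p * ((p + 1) * (p - 1) ^ 2) := by
  have : Fact p.Prime := ⟨hp⟩
  have hG : Nat.card (Multiplicative (ZMod p × ZMod p)) = p ^ 2 := by
    simp [ZMod.card, sq]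
  have hexp : ∀ g : Multiplicative (ZMod p × ZMod p), g ^ p = 1 := fun g =>
    congrArg Multiplicative.ofAdd (ZModModule.char_nsmul_eq_zero p g.toAdd)
  have hlines : ∀ H : Subgroup (Multiplicative (ZMod p × ZMod p)), Nat.card H = p →
      Nat.card (MulAut H) = p - 1 := fun H hH => by
    have := isCyclic_of_prime_card hH
    rw [IsCyclic.card_mulAut, hH, Nat.totient_prime hp]
  rw [S, finsum_subgroups_of_card_eq_prime_sq hp hG _ hlines, smul_eq_mul,
    ← card_orderOf_eq_prime_eq_card_subgroups_mul hp,
    card_orderOf_eq_prime_of_forall_pow_eq_one hp hexp, hG, Nat.card_unique,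
    Nat.card_congr (MulAut.congr Subgroup.topEquiv).toEquiv, card_mulAut_multiplicative_zmod_prod]
  have h1 : 1 ≤ p := hp.one_lt.le
  have h2 : p ≤ p ^ 2 := Nat.le_self_pow two_ne_zero p
  zify [h1, h2, h1.trans h2]
  ring
end
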